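/- Assume λ + μ² ≠ 0, let P, Q, R, S be a pqrs-quad satisfying the A-relations, and suppose the first-integral constant 𝔇 = P(0)·S(0) − Q(0)·R(0) is nonzero. Then the operator L_A acts injectively on the space of solutions of the special double confluent Heun equation: if F is entire, ℋ[F] = 0, and L_A[F](w) = 0 for all w ∈ ℂ, then F(w) = 0 for all w ∈ ℂ. -/
import Mathlib


noncomputable def ipi : ℂ := (Real.pi : ℂ) * Complex.I

noncomputable def heunOp (ell lam mu : ℂ) (F : ℂ → ℂ) : ℂ → ℂ := fun w =>
  deriv (deriv F) w + (ell + mu * (Complex.exp (-w) - Complex.exp w)) * deriv F w +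
    (lam - (ell + 1) * mu * Complex.exp w) * F w

noncomputable def opLA (mu : ℂ) (P Q : ℂ → ℂ) (F : ℂ → ℂ) : ℂ → ℂ := fun w =>
  Complex.exp (mu * (Complex.exp w + Complex.exp (-w))) *
    (Q (ipi - w) * F (ipi - w) - Complex.exp (-w) * P (ipi - w) * deriv F (ipi - w))

theorem statement_12 (ell lam mu : ℂ) (hne : lam + mu ^ 2 ≠ 0) (P Q R S : ℂ → ℂ)
    (hP : Differentiable ℂ P) (hQ : Differentiable ℂ Q)
    (hR : Differentiable ℂ R) (hS : Differentiable ℂ S)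
    (hsys1 : ∀ w : ℂ, Complex.exp w * deriv P w =
      (mu + (ell - 1) * Complex.exp w) * P w - Q w + Complex.exp (2 * w) * R w)
    (hsys2 : ∀ w : ℂ, deriv Q w =
      Complex.exp w * ((lam - (ell + 1) * mu * Complex.exp w) * P w + mu * Q w + S w))
    (hsys3 : ∀ w : ℂ, Complex.exp w * deriv R w =
      -(lam + mu ^ 2) * P w + Complex.exp w * (2 * (ell - 1) - mu * Complex.exp w) * R w - S w)
    (hsys4 : ∀ w : ℂ, Complex.exp w * deriv S w =
      -(lam + mu ^ 2) * Q w + Complex.exp (2 * w) * (lam - (ell + 1) * mu * Complex.exp w) * R w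
        + ((ell - 1) * Complex.exp w - mu) * S w)
    (hA : ∀ w : ℂ,
      P (ipi - w) = -Complex.exp (Complex.I * ell * (Real.pi : ℂ)) *
        Complex.exp (2 * (1 - ell) * w) * P w ∧
      Q (ipi - w) = Complex.exp (Complex.I * ell * (Real.pi : ℂ)) *
        Complex.exp (-(2 * ell) * w) * (mu * P w + Complex.exp (2 * w) * R w) ∧
      R (ipi - w) = Complex.exp (Complex.I * ell * (Real.pi : ℂ)) *
        Complex.exp (2 * (1 - ell) * w) * (mu * Complex.exp (2 * w) * P w + Q w) ∧
      S (ipi - w) = -Complex.exp (Complex.I * ell * (Real.pi : ℂ)) *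
        Complex.exp (-(2 * ell) * w) *
        (mu * (mu * Complex.exp (2 * w) * P w + Q w) +
          Complex.exp (2 * w) * (mu * Complex.exp (2 * w) * R w + S w)))
    (hD : P 0 * S 0 - Q 0 * R 0 ≠ 0)
    (F : ℂ → ℂ) (hF : Differentiable ℂ F) (hF' : Differentiable ℂ (deriv F))
    (hHeun : ∀ w : ℂ, heunOp ell lam mu F w = 0)
    (hLA : ∀ w : ℂ, opLA mu P Q F w = 0) :
    ∀ w : ℂ, F w = 0 := by
  have hEx : ∀ v : ℂ, Complex.exp v ≠ 0 := Complex.exp_ne_zero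
  have hexp2 : ∀ v : ℂ, Complex.exp (2 * v) = Complex.exp v * Complex.exp v := by
    intro v; rw [two_mul, Complex.exp_add]
  have hinv : ∀ v : ℂ, Complex.exp v * Complex.exp (-v) = 1 := by
    intro v; rw [← Complex.exp_add]; simp
  -- Step 1: Q F + e^w P F' = 0
  have hg : ∀ v : ℂ, Q v * F v + Complex.exp v * P v * deriv F v = 0 := by
    intro v
    have h := hLA (ipi - v)
    simp only [opLA] at h
    have h2 : ipi - (ipi - v) = v := by ring
    rw [h2] at h
    have h3 : Complex.exp (-(ipi - v)) = -Complex.exp v := by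
      rw [neg_sub, Complex.exp_sub, ipi, Complex.exp_pi_mul_I]
      field_simp
    rw [h3] at h
    have h4 := (mul_eq_zero.mp h).resolve_left (hEx _)
    linear_combination h4
  -- Step 2: S F + e^w R F' = 0
  have hh : ∀ v : ℂ, S v * F v + Complex.exp v * R v * deriv F v = 0 := by
    intro v
    have hdg : HasDerivAt (fun x => Q x * F x + Complex.exp x * P x * deriv F x)
        (deriv Q v * F v + Q v * deriv F v +
          ((Complex.exp v * P v + Complex.exp v * deriv P v) * deriv F v +
            Complex.exp v * P v * deriv (deriv F) v)) v :=
      ((hQ v).hasDerivAt.mul (hF v).hasDerivAt).add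
        (((Complex.hasDerivAt_exp v).mul (hP v).hasDerivAt).mul (hF' v).hasDerivAt)
    have hzero : (fun x => Q x * F x + Complex.exp x * P x * deriv F x) = fun _ => (0 : ℂ) :=
      funext hg
    rw [hzero] at hdg
    have h0 := hdg.unique (hasDerivAt_const v 0)
    have h1 := hsys1 v
    have h2 := hsys2 v
    have hH := hHeun v
    simp only [heunOp] at hH
    rw [hexp2 v] at h1
    have key : Complex.exp v * (S v * F v + Complex.exp v * R v * deriv F v) = 0 := by
      linear_combination h0 - F v * h2 - deriv F v * h1 - Complex.exp v * P v * hH -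
        mu * Complex.exp v * hg v + mu * P v * deriv F v * hinv v
    exact (mul_eq_zero.mp key).resolve_left (hEx v)
  -- Step 3: D = P S - Q R is nowhere zero
  have hDne : ∀ w : ℂ, P w * S w - Q w * R w ≠ 0 := by
    have hK : ∀ x : ℂ, HasDerivAt
        (fun y => (P y * S y - Q y * R y) * Complex.exp ((2 - 2 * ell) * y)) 0 x := by
      intro x
      have hd : HasDerivAt (fun y => P y * S y - Q y * R y)
          (deriv P x * S x + P x * deriv S x - (deriv Q x * R x + Q x * deriv R x)) x :=
        ((hP x).hasDerivAt.mul (hS x).hasDerivAt).sub ((hQ x).hasDerivAt.mul (hR x).hasDerivAt)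
      have he : HasDerivAt (fun y => Complex.exp ((2 - 2 * ell) * y))
          (Complex.exp ((2 - 2 * ell) * x) * (2 - 2 * ell)) x := by
        simpa using ((hasDerivAt_id x).const_mul (2 - 2 * ell)).cexp
      have hdD : deriv P x * S x + P x * deriv S x - (deriv Q x * R x + Q x * deriv R x)
          = (2 * ell - 2) * (P x * S x - Q x * R x) := by
        have h1 := hsys1 x
        have h2 := hsys2 x
        have h3 := hsys3 x
        have h4 := hsys4 x
        rw [hexp2 x] at h1 h4
        have key : Complex.exp x * (deriv P x * S x + P x * deriv S x -
            (deriv Q x * R x + Q x * deriv R x))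
            = Complex.exp x * ((2 * ell - 2) * (P x * S x - Q x * R x)) := by
          linear_combination S x * h1 + P x * h4 - (Complex.exp x * R x) * h2 - Q x * h3
        exact mul_left_cancel₀ (hEx x) key
      have hval : deriv P x * S x + P x * deriv S x - (deriv Q x * R x + Q x * deriv R x) =
          (2 * ell - 2) * (P x * S x - Q x * R x) := hdD
      have := hd.mul he
      have hv0 : (deriv P x * S x + P x * deriv S x - (deriv Q x * R x + Q x * deriv R x)) *
          Complex.exp ((2 - 2 * ell) * x) +
          (P x * S x - Q x * R x) * (Complex.exp ((2 - 2 * ell) * x) * (2 - 2 * ell)) = 0 := by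
        rw [hval]; ring
      rw [hv0] at this
      exact this
    have hdiff : Differentiable ℂ
        (fun y => (P y * S y - Q y * R y) * Complex.exp ((2 - 2 * ell) * y)) :=
      fun x => (hK x).differentiableAt
    have hder0 : ∀ x : ℂ, deriv
        (fun y => (P y * S y - Q y * R y) * Complex.exp ((2 - 2 * ell) * y)) x = 0 :=
      fun x => (hK x).deriv
    intro w
    have hc := is_const_of_deriv_eq_zero hdiff hder0 w 0
    simp only [mul_zero, Complex.exp_zero, mul_one] at hc
    intro habs
    rw [habs, zero_mul] at hc
    exact hD hc.symm
  -- conclusion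
  intro w
  have hDF : (P w * S w - Q w * R w) * F w = 0 := by
    linear_combination P w * hh w - R w * hg w
  exact (mul_eq_zero.mp hDF).resolve_left (hDne w)
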